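/- Let α > 1, t > 0, p ∈ [0,1] and x ∈ ℝ, and write c = cos(π/(2α)), s = sin(π/(2α)). Then (1/(2π)) ∫_{-∞}^{∞} e^{−iγx} · [ p · e^{−t|γ|c + i t s γ} + (1−p) · e^{−t|γ|c − i t s γ} ] dγ = f_{α,p,t}(x); in particular the inverse Fourier transform of this mixture of asymmetric Cauchy characteristic functions is the probability density f_{α,p,t}. -/

import Mathlib

/-!
With `c = cos(π/(2α)) > 0` and `s = sin(π/(2α))`, the integrand is `p φ₊ + (1 - p) φ₋` where
`φ± ξ = exp(-tc|ξ| + i(±ts - x)ξ)`. Splitting at `0`, `∫ exp(-a|ξ| + ibξ) dξ` is a sum of two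
exponential integrals, `1/(a - ib) + 1/(a + ib) = 2a/(a² + b²)`, which is `2π` times the Cauchy
density with scale `a`. So the left-hand side is `p · Cauchy(ts, tc) + (1 - p) · Cauchy(-ts, tc)` at
`x`, and this mixture is `f_{α,p,t}` because `cos(π/α) = 2c² - 1` makes the quartic denominator
factor as `((x - ts)² + t²c²)((x + ts)² + t²c²)`.
-/

open Real MeasureTheory Complex

/-- The mixture-of-asymmetric-Cauchy probability density `f_{α,p,t}`. -/
noncomputable def cauchyMixDensity (α p t x : ℝ) : ℝ :=
  (t * Real.cos (π / (2 * α)) / π) *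
    ((x ^ 2 + t ^ 2 + 2 * (2 * p - 1) * x * t * Real.sin (π / (2 * α))) /
      (x ^ 4 + t ^ 4 + 2 * x ^ 2 * t ^ 2 * Real.cos (π / α)))

open Set ProbabilityTheory

lemma cos_pi_div_two_mul_pos {α : ℝ} (hα : 1 < α) : 0 < Real.cos (π / (2 * α)) := by
  apply Real.cos_pos_of_mem_Ioo
  constructor
  · linarith [pi_pos, (by positivity : 0 < π / (2 * α))]
  · exact div_lt_div_of_pos_left pi_pos two_pos (by linarith)

section CauchyCharFun

variable {a : ℝ} (b : ℝ)

lemma cexp_neg_mul_abs_add_mul_I_of_nonneg {ξ : ℝ} (hξ : 0 ≤ ξ) :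
    cexp (-(a * (|ξ| : ℝ)) + b * ξ * I) = cexp ((-a + b * I) * ξ) := by
  rw [abs_of_nonneg hξ]; ring_nf

lemma cexp_neg_mul_abs_add_mul_I_of_nonpos {ξ : ℝ} (hξ : ξ ≤ 0) :
    cexp (-(a * (|ξ| : ℝ)) + b * ξ * I) = cexp ((a + b * I) * ξ) := by
  rw [abs_of_nonpos hξ]; push_cast; ring_nf

lemma integrable_cexp_neg_mul_abs_add_mul_I (ha : 0 < a) :
    Integrable (fun ξ : ℝ => cexp (-(a * (|ξ| : ℝ)) + b * ξ * I)) := by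
  rw [← integrableOn_univ, ← Iic_union_Ioi (a := (0 : ℝ))]
  refine IntegrableOn.union ?_ ?_
  · refine (integrableOn_exp_mul_complex_Iic (a := a + b * I) (by simpa) 0).congr_fun
      (fun ξ hξ => ?_) measurableSet_Iic
    exact (cexp_neg_mul_abs_add_mul_I_of_nonpos b hξ).symm
  · refine (integrableOn_exp_mul_complex_Ioi (a := -a + b * I) (by simpa) 0).congr_fun
      (fun ξ hξ => ?_) measurableSet_Ioi
    exact (cexp_neg_mul_abs_add_mul_I_of_nonneg b (le_of_lt hξ)).symm

lemma integral_cexp_neg_mul_abs_add_mul_I (ha : 0 < a) :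
    ∫ ξ : ℝ, cexp (-(a * (|ξ| : ℝ)) + b * ξ * I) = ((2 * a / (a ^ 2 + b ^ 2) : ℝ) : ℂ) := by
  have hint := integrable_cexp_neg_mul_abs_add_mul_I b ha
  rw [← intervalIntegral.integral_Iic_add_Ioi hint.integrableOn hint.integrableOn,
    setIntegral_congr_fun measurableSet_Iic
      (fun ξ hξ => cexp_neg_mul_abs_add_mul_I_of_nonpos b hξ),
    setIntegral_congr_fun measurableSet_Ioi
      (fun ξ hξ => cexp_neg_mul_abs_add_mul_I_of_nonneg b (le_of_lt hξ)),
    integral_exp_mul_complex_Iic (by simpa) 0, integral_exp_mul_complex_Ioi (by simpa) 0]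
  have hplus : (a : ℂ) + b * I ≠ 0 := fun h => by simpa [ha.ne'] using congrArg re h
  have hminus : -(a : ℂ) + b * I ≠ 0 := fun h => by simpa [ha.ne'] using congrArg re h
  have hnorm : (a : ℂ) ^ 2 + b ^ 2 ≠ 0 := by exact_mod_cast (by positivity : a ^ 2 + b ^ 2 ≠ 0)
  rw [ofReal_zero, mul_zero, mul_zero, Complex.exp_zero]
  push_cast
  field_simp
  linear_combination (-2 * (a : ℂ) * b ^ 2) * I_sq

lemma integral_cexp_neg_mul_abs_add_mul_I_eq_cauchyPDFReal (ha : 0 < a) (x₀ x : ℝ) :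
    ∫ ξ : ℝ, cexp (-(a * (|ξ| : ℝ)) + ((x₀ - x : ℝ) : ℂ) * ξ * I) =
      2 * π * cauchyPDFReal x₀ a.toNNReal x := by
  rw [integral_cexp_neg_mul_abs_add_mul_I _ ha, cauchyPDFReal_def, Real.coe_toNNReal _ ha.le]
  have : (x - x₀) ^ 2 + a ^ 2 ≠ 0 := by positivity
  push_cast
  field_simp
  ring

end CauchyCharFun

lemma cauchyMixDensity_eq_mix_cauchyPDFReal {α t : ℝ} (hα : 1 < α) (ht : 0 < t) (p x : ℝ) :
    cauchyMixDensity α p t x =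
      p * cauchyPDFReal (t * Real.sin (π / (2 * α))) (t * Real.cos (π / (2 * α))).toNNReal x +
        (1 - p) * cauchyPDFReal (-(t * Real.sin (π / (2 * α))))
          (t * Real.cos (π / (2 * α))).toNNReal x := by
  have hc := cos_pi_div_two_mul_pos hα
  set c := Real.cos (π / (2 * α))
  set s := Real.sin (π / (2 * α))
  have hpyth : s ^ 2 + c ^ 2 = 1 := sin_sq_add_cos_sq _
  have hcos : Real.cos (π / α) = 2 * c ^ 2 - 1 := by
    rw [← Real.cos_two_mul]
    congr 1
    field_simp
  have hden : x ^ 4 + t ^ 4 + 2 * x ^ 2 * t ^ 2 * Real.cos (π / α) =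
      ((x - t * s) ^ 2 + (t * c) ^ 2) * ((x - -(t * s)) ^ 2 + (t * c) ^ 2) := by
    rw [hcos]
    linear_combination (2 * x ^ 2 * t ^ 2 - t ^ 4 * (s ^ 2 + c ^ 2 + 1)) * hpyth
  rw [cauchyMixDensity, cauchyPDFReal_def, cauchyPDFReal_def, Real.coe_toNNReal _ (by positivity),
    hden]
  field_simp
  linear_combination (-(c * t ^ 2)) * hpyth

theorem cauchyMix_inverse_fourier_general (α p t x : ℝ) (hα : 1 < α) (ht : 0 < t) :
    (1 / (2 * (π : ℂ))) *
        ∫ γ : ℝ, Complex.exp (-Complex.I * (γ : ℂ) * (x : ℂ)) *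
          ((p : ℂ) * Complex.exp (-(t : ℂ) * (|γ| : ℝ) *
              (Real.cos (π / (2 * α)) : ℂ) +
              Complex.I * (t : ℂ) * (Real.sin (π / (2 * α)) : ℂ) * (γ : ℂ)) +
            (1 - (p : ℂ)) * Complex.exp (-(t : ℂ) * (|γ| : ℝ) *
              (Real.cos (π / (2 * α)) : ℂ) -
              Complex.I * (t : ℂ) * (Real.sin (π / (2 * α)) : ℂ) * (γ : ℂ))) =
      (cauchyMixDensity α p t x : ℂ) := by
  rw [cauchyMixDensity_eq_mix_cauchyPDFReal hα ht]
  have hc := mul_pos ht (cos_pi_div_two_mul_pos hα)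
  set c := Real.cos (π / (2 * α))
  set s := Real.sin (π / (2 * α))
  have hmix : ∀ γ : ℝ,
      cexp (-I * γ * x) * (p * cexp (-t * (|γ| : ℝ) * c + I * t * s * γ) +
          (1 - p) * cexp (-t * (|γ| : ℝ) * c - I * t * s * γ)) =
        p * cexp (-((t * c : ℝ) * (|γ| : ℝ)) + ((t * s - x : ℝ) : ℂ) * γ * I) +
          (1 - p) * cexp (-((t * c : ℝ) * (|γ| : ℝ)) + ((-(t * s) - x : ℝ) : ℂ) * γ * I) := by
    intro γ
    rw [mul_add, mul_left_comm, mul_left_comm (cexp _), ← Complex.exp_add, ← Complex.exp_add]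
    congr 2 <;> · push_cast; ring_nf
  simp_rw [hmix]
  rw [integral_add ((integrable_cexp_neg_mul_abs_add_mul_I _ hc).const_mul _)
      ((integrable_cexp_neg_mul_abs_add_mul_I _ hc).const_mul _),
    integral_const_mul, integral_const_mul,
    integral_cexp_neg_mul_abs_add_mul_I_eq_cauchyPDFReal hc,
    integral_cexp_neg_mul_abs_add_mul_I_eq_cauchyPDFReal hc]
  push_cast
  field_simp

/-- For `α > 1`, `t > 0`, `p ∈ [0,1]` and `x ∈ ℝ`, with
`c = cos(π/(2α))` and `s = sin(π/(2α))`, the inverse Fourier transform of the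
mixture of asymmetric Cauchy characteristic functions equals `f_{α,p,t}(x)`:
`(1/(2π)) ∫_ℝ e^{−iγx} [ p e^{−t|γ|c + i t s γ} + (1−p) e^{−t|γ|c − i t s γ} ] dγ
  = f_{α,p,t}(x)`. -/
theorem cauchyMix_inverse_fourier (α p t x : ℝ) (hα : 1 < α) (ht : 0 < t)
    (hp0 : 0 ≤ p) (hp1 : p ≤ 1) :
    (1 / (2 * (π : ℂ))) *
        ∫ γ : ℝ, Complex.exp (-Complex.I * (γ : ℂ) * (x : ℂ)) *
          ((p : ℂ) * Complex.exp (-(t : ℂ) * (|γ| : ℝ) *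
              (Real.cos (π / (2 * α)) : ℂ) +
              Complex.I * (t : ℂ) * (Real.sin (π / (2 * α)) : ℂ) * (γ : ℂ)) +
            (1 - (p : ℂ)) * Complex.exp (-(t : ℂ) * (|γ| : ℝ) *
              (Real.cos (π / (2 * α)) : ℂ) -
              Complex.I * (t : ℂ) * (Real.sin (π / (2 * α)) : ℂ) * (γ : ℂ))) =
      (cauchyMixDensity α p t x : ℂ) :=
  cauchyMix_inverse_fourier_general α p t x hα ht
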